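/- There is no J_4-free simple graph G with G → (3,3)^e; equivalently, the edge Folkman number F_e(3,3;J_4) does not exist. -/

import Mathlib

/-- `G → (3,3)ᵉ`: every 2-coloring of the edges of `G` contains three pairwise adjacent
vertices whose three connecting edges all have the same color. -/
def EdgeArrows33 {V : Type*} (G : SimpleGraph V) : Prop :=
  ∀ c : Sym2 V → Bool, ∃ x y z : V,
    G.Adj x y ∧ G.Adj x z ∧ G.Adj y z ∧
    c s(x, y) = c s(x, z) ∧ c s(x, z) = c s(y, z)

/-- `G` is `H`-free: `G` contains no (not necessarily induced) subgraph isomorphic to `H`,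
i.e. there is no injective graph homomorphism from `H` to `G`. -/
def HFree {W V : Type*} (H : SimpleGraph W) (G : SimpleGraph V) : Prop :=
  ¬ ∃ f : H →g G, Function.Injective f

/-- `J₄ = K₄ - e`: the complete graph on four vertices minus the edge `{0, 1}`. -/
def J4 : SimpleGraph (Fin 4) :=
  (SimpleGraph.fromRel (fun i j => i = 0 ∧ j = 1))ᶜ

/-- The edge Folkman number `F_e(3,3;H)`, as an element of `ℕ∞`: the least `n`
admitting an `H`-free graph on `n` vertices arrowing `(3,3)ᵉ`. -/
noncomputable def folkmanE {W : Type*} (H : SimpleGraph W) : ℕ∞ :=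
  sInf {n : ℕ∞ | ∃ m : ℕ, (m : ℕ∞) = n ∧
    ∃ G : SimpleGraph (Fin m), HFree H G ∧ EdgeArrows33 G}

/-!
In a `J₄`-free graph two adjacent vertices have at most one common neighbour, so every edge lies
in at most one triangle. Well-order the vertices and colour an edge `true` exactly when its
endpoints have a common neighbour below both. In a triangle with least vertex `a`, the edge
opposite `a` is coloured `true` (with apex `a`), while an edge `ab` at `a` is coloured `false`: its
only common neighbour is the third vertex of the triangle, which lies above `a`. Hence no triangle
is monochromatic.
-/

namespace SimpleGraph

variable {V : Type*} {G : SimpleGraph V}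

theorem commonNeighbors_subsingleton_of_hFree_J4 (hG : HFree J4 G) {a b : V} (hab : G.Adj a b) :
    (G.commonNeighbors a b).Subsingleton := by
  rintro w ⟨haw, hbw⟩ z ⟨haz, hbz⟩
  by_contra hwz
  refine hG ⟨⟨![w, z, a, b], fun {i j} hij => ?_⟩, fun i j hij => ?_⟩
  · fin_cases i <;> fin_cases j <;> simp [J4] at hij ⊢ <;> first | assumption | exact Adj.symm ‹_›
  · have := haw.ne; have := hbw.ne; have := haz.ne; have := hbz.ne
    fin_cases i <;> fin_cases j <;> simp_all [eq_comm, hab.ne]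

section LowApex

variable [LinearOrder V] (G)

def lowApexEdges : Set (Sym2 V) :=
  {e | ∃ w, ∀ v ∈ e, G.Adj w v ∧ w < v}

variable {G}

@[simp]
theorem mk_mem_lowApexEdges {x y : V} :
    s(x, y) ∈ G.lowApexEdges ↔ ∃ w, (G.Adj w x ∧ w < x) ∧ (G.Adj w y ∧ w < y) := by
  simp only [lowApexEdges, Set.mem_ofPred_eq, Sym2.forall_mem_pair]

theorem lowApexEdges_of_triangle
    (hG : ∀ ⦃a b⦄, G.Adj a b → (G.commonNeighbors a b).Subsingleton)
    {a b d : V} (hab : G.Adj a b) (had : G.Adj a d) (hbd : G.Adj b d) (hb : a < b) (hd : a < d) :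
    s(a, b) ∉ G.lowApexEdges ∧ s(b, d) ∈ G.lowApexEdges := by
  refine ⟨?_, mk_mem_lowApexEdges.2 ⟨a, ⟨hab, hb⟩, had, hd⟩⟩
  rintro ⟨w, hw⟩
  rw [Sym2.forall_mem_pair] at hw
  have : w = d := hG hab ⟨hw.1.1.symm, hw.2.1.symm⟩ ⟨had, hbd⟩
  exact hd.not_gt (this ▸ hw.1.2)

end LowApex

theorem not_edgeArrows33_of_commonNeighbors_subsingleton
    (hG : ∀ ⦃a b⦄, G.Adj a b → (G.commonNeighbors a b).Subsingleton) : ¬ EdgeArrows33 G := by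
  classical
  let : LinearOrder V := linearOrderOfSTO WellOrderingRel
  intro hG3
  obtain ⟨x, y, z, hxy, hxz, hyz, hc⟩ := hG3 fun e => decide (e ∈ G.lowApexEdges)
  simp only [decide_eq_decide] at hc
  obtain ⟨hy, hz⟩ | ⟨hx, hz⟩ | ⟨hx, hy⟩ : (x < y ∧ x < z) ∨ (y < x ∧ y < z) ∨ (z < x ∧ z < y) := by
    grind [hxy.ne, hxz.ne, hyz.ne]
  · obtain ⟨hout, hin⟩ := lowApexEdges_of_triangle hG hxy hxz hyz hy hz
    exact hout (hc.1.2 (hc.2.2 hin))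
  · obtain ⟨hout, hin⟩ := lowApexEdges_of_triangle hG hxy.symm hyz hxz hx hz
    exact hout (Sym2.eq_swap ▸ hc.1.2 hin)
  · obtain ⟨hout, hin⟩ := lowApexEdges_of_triangle hG hxz.symm hyz.symm hxy hx hy
    exact hout (Sym2.eq_swap ▸ hc.1.1 hin)

theorem not_edgeArrows33_of_hFree_J4 (hG : HFree J4 G) : ¬ EdgeArrows33 G :=
  not_edgeArrows33_of_commonNeighbors_subsingleton fun _ _ => commonNeighbors_subsingleton_of_hFree_J4 hG

end SimpleGraph

theorem folkmanE_eq_top {W : Type*} {H : SimpleGraph W}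
    (hH : ∀ (m : ℕ) (G : SimpleGraph (Fin m)), HFree H G → ¬ EdgeArrows33 G) :
    folkmanE H = ⊤ :=
  sInf_eq_top.2 fun _ ⟨m, _, G, hG, hG3⟩ => (hH m G hG hG3).elim

theorem stmt_16 :
    (∀ (V : Type) (G : SimpleGraph V), HFree J4 G → ¬ EdgeArrows33 G) ∧
    folkmanE J4 = ⊤ :=
  ⟨fun _ _ => SimpleGraph.not_edgeArrows33_of_hFree_J4,
    folkmanE_eq_top fun _ _ => SimpleGraph.not_edgeArrows33_of_hFree_J4⟩
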